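/- Let U ⊂ ℝⁿ be an open set on which every point u = (u₁,…,uₙ) has all coordinates uᵢ ≠ 0, and let f : U → ℝ be smooth. Then the set A(f,U) = { a ∈ ℝⁿ : the function u ↦ f(u) + a₁u₁² + ⋯ + aₙuₙ² is Morse on U } is residual in ℝⁿ. -/

import Mathlib

open Filter Set Topology

/-- Hessian matrix of second partial derivatives. -/
noncomputable def Hess {n : ℕ} (f : (Fin n → ℝ) → ℝ) (x : Fin n → ℝ) :
    Matrix (Fin n) (Fin n) ℝ :=
  Matrix.of fun i j => fderiv ℝ (fun y => fderiv ℝ f y (Pi.single j 1)) x (Pi.single i 1)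

/-- `x` is a critical point of `f`. -/
def IsCriticalPt {n : ℕ} (f : (Fin n → ℝ) → ℝ) (x : Fin n → ℝ) : Prop :=
  fderiv ℝ f x = 0

/-- `f` is Morse on `U`: every critical point in `U` has invertible Hessian. -/
def MorseOn {n : ℕ} (f : (Fin n → ℝ) → ℝ) (U : Set (Fin n → ℝ)) : Prop :=
  ∀ x ∈ U, IsCriticalPt f x → (Hess f x).det ≠ 0

/-- The quadratic perturbation `q_a(x) = ∑ aᵢ xᵢ²`. -/
def qa {n : ℕ} (a : Fin n → ℝ) (x : Fin n → ℝ) : ℝ := ∑ i, a i * (x i) ^ 2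

section Aux

variable {n : ℕ} {U : Set (Fin n → ℝ)} {f : (Fin n → ℝ) → ℝ}

/-- The map whose "critical values" are the bad parameters `a`. -/
noncomputable def phiMap (f : (Fin n → ℝ) → ℝ) (x : Fin n → ℝ) : Fin n → ℝ :=
  fun i => -(fderiv ℝ f x (Pi.single i 1)) * (2 * x i)⁻¹

lemma qa_hasFDerivAt (a x : Fin n → ℝ) :
    HasFDerivAt (qa a)
      (∑ k, (2 * a k * x k) • (ContinuousLinearMap.proj k : (Fin n → ℝ) →L[ℝ] ℝ)) x := by
  have h : ∀ k ∈ Finset.univ, HasFDerivAt (fun y : Fin n → ℝ => a k * y k ^ 2)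
      ((2 * a k * x k) • (ContinuousLinearMap.proj k : (Fin n → ℝ) →L[ℝ] ℝ)) x := by
    intro k _
    have h0 : HasDerivAt (fun t : ℝ => a k * t ^ 2) (a k * ((2 : ℕ) * x k ^ 1)) (x k) :=
      HasDerivAt.const_mul (a k) (hasDerivAt_pow 2 (x k))
    have := h0.comp_hasFDerivAt x (hasFDerivAt_apply (𝕜 := ℝ) k x)
    rw [show (2 * a k * x k) = a k * ((2:ℕ) * x k ^ 1) by push_cast; ring]
    exact this
  exact HasFDerivAt.fun_sum h

lemma second_deriv_hasFDerivAt (hU : IsOpen U) (hf : ContDiffOn ℝ (⊤ : ℕ∞) f U)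
    {x : Fin n → ℝ} (hx : x ∈ U) :
    HasFDerivAt (fderiv ℝ f) (fderiv ℝ (fderiv ℝ f) x) x := by
  have hc : ContDiffAt ℝ (⊤ : ℕ∞) f x := hf.contDiffAt (hU.mem_nhds hx)
  have h1 : ContDiffAt ℝ 1 (fderiv ℝ f) x := hc.fderiv_right (WithTop.coe_le_coe.2 le_top)
  exact (h1.differentiableAt one_ne_zero).hasFDerivAt

lemma partial_hasFDerivAt (hU : IsOpen U) (hf : ContDiffOn ℝ (⊤ : ℕ∞) f U)
    {x : Fin n → ℝ} (hx : x ∈ U) (j : Fin n) :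
    HasFDerivAt (fun y => fderiv ℝ f y (Pi.single j 1))
      ((ContinuousLinearMap.apply ℝ ℝ (Pi.single j 1)).comp (fderiv ℝ (fderiv ℝ f) x)) x := by
  have hL := (ContinuousLinearMap.apply ℝ ℝ (Pi.single j 1)).hasFDerivAt
    (x := fderiv ℝ f x)
  exact hL.comp x (second_deriv_hasFDerivAt hU hf hx)

lemma phi_comp_hasFDerivAt (hU : IsOpen U) (hf : ContDiffOn ℝ (⊤ : ℕ∞) f U)
    {x : Fin n → ℝ} (hx : x ∈ U) (i : Fin n) (hxi : x i ≠ 0) :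
    HasFDerivAt (fun y => phiMap f y i)
      ((-(fderiv ℝ f x (Pi.single i 1))) •
          ((-((2 * x i) ^ 2)⁻¹) • ((2:ℝ) • (ContinuousLinearMap.proj i : (Fin n → ℝ) →L[ℝ] ℝ)))
        + ((2 * x i)⁻¹) •
          (-((ContinuousLinearMap.apply ℝ ℝ (Pi.single i 1)).comp (fderiv ℝ (fderiv ℝ f) x)))) x := by
  have h4 : HasFDerivAt (fun y : Fin n → ℝ => 2 * y i)
      ((2:ℝ) • (ContinuousLinearMap.proj i : (Fin n → ℝ) →L[ℝ] ℝ)) x :=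
    (hasFDerivAt_apply i x).const_mul 2
  have h5 : HasFDerivAt (fun y : Fin n → ℝ => (2 * y i)⁻¹)
      ((-((2 * x i) ^ 2)⁻¹) • ((2:ℝ) • (ContinuousLinearMap.proj i : (Fin n → ℝ) →L[ℝ] ℝ))) x :=
    (hasDerivAt_inv (mul_ne_zero two_ne_zero hxi)).comp_hasFDerivAt x h4
  exact (partial_hasFDerivAt hU hf hx i).neg.mul h5

lemma phiMap_differentiableAt (hU : IsOpen U) (hf : ContDiffOn ℝ (⊤ : ℕ∞) f U)
    {x : Fin n → ℝ} (hx : x ∈ U) (hxne : ∀ i, x i ≠ 0) :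
    DifferentiableAt ℝ (phiMap f) x :=
  differentiableAt_pi.2 fun i => (phi_comp_hasFDerivAt hU hf hx i (hxne i)).differentiableAt

lemma fderiv_phiMap_apply (hU : IsOpen U) (hf : ContDiffOn ℝ (⊤ : ℕ∞) f U)
    {x : Fin n → ℝ} (hx : x ∈ U) (hxne : ∀ i, x i ≠ 0) (i j : Fin n) :
    fderiv ℝ (phiMap f) x (Pi.single j 1) i =
      -(fderiv ℝ f x (Pi.single i 1)) *
          (-((2 * x i) ^ 2)⁻¹ * (2 * (if i = j then 1 else 0)))
        + (2 * x i)⁻¹ *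
          (-(fderiv ℝ (fderiv ℝ f) x (Pi.single j 1) (Pi.single i 1))) := by
  have hdiff : ∀ i : Fin n, DifferentiableAt ℝ (fun y => phiMap f y i) x :=
    fun i => (phi_comp_hasFDerivAt hU hf hx i (hxne i)).differentiableAt
  have h1 : fderiv ℝ (phiMap f) x =
      ContinuousLinearMap.pi fun i => fderiv ℝ (fun y => phiMap f y i) x :=
    fderiv_pi hdiff
  have h2 : fderiv ℝ (fun y => phiMap f y i) x =
      (-(fderiv ℝ f x (Pi.single i 1))) •
          ((-((2 * x i) ^ 2)⁻¹) • ((2:ℝ) • (ContinuousLinearMap.proj i : (Fin n → ℝ) →L[ℝ] ℝ)))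
        + ((2 * x i)⁻¹) •
          (-((ContinuousLinearMap.apply ℝ ℝ (Pi.single i 1)).comp (fderiv ℝ (fderiv ℝ f) x))) :=
    (phi_comp_hasFDerivAt hU hf hx i (hxne i)).fderiv
  rw [h1]
  simp only [ContinuousLinearMap.pi_apply, h2, ContinuousLinearMap.add_apply,
    ContinuousLinearMap.smul_apply, ContinuousLinearMap.neg_apply,
    ContinuousLinearMap.coe_comp', Function.comp_apply, ContinuousLinearMap.apply_apply,
    ContinuousLinearMap.proj_apply, smul_eq_mul, Pi.single_apply]

/-- The Hessian of the perturbed function. -/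
lemma hess_perturbed (hU : IsOpen U) (hf : ContDiffOn ℝ (⊤ : ℕ∞) f U)
    {x : Fin n → ℝ} (hx : x ∈ U) (a : Fin n → ℝ) (i j : Fin n) :
    Hess (fun y => f y + qa a y) x i j =
      fderiv ℝ (fderiv ℝ f) x (Pi.single i 1) (Pi.single j 1)
        + 2 * a j * (if j = i then 1 else 0) := by
  have hG : (fun y => fderiv ℝ (fun z => f z + qa a z) y (Pi.single j 1)) =ᶠ[nhds x]
      (fun y => fderiv ℝ f y (Pi.single j 1) + 2 * a j * y j) := by
    filter_upwards [hU.mem_nhds hx] with y hy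
    have hdf : DifferentiableAt ℝ f y :=
      (hf.contDiffAt (hU.mem_nhds hy)).differentiableAt (by simp)
    have hq := qa_hasFDerivAt a y
    have hsum : fderiv ℝ (fun z => f z + qa a z) y =
        fderiv ℝ f y + ∑ k, (2 * a k * y k) • (ContinuousLinearMap.proj k : (Fin n → ℝ) →L[ℝ] ℝ) :=
      (hdf.hasFDerivAt.add hq).fderiv
    rw [hsum]
    simp [ContinuousLinearMap.sum_apply, Pi.single_apply, mul_ite, Finset.sum_ite_eq']
  have hH : Hess (fun y => f y + qa a y) x i j =
      fderiv ℝ (fun y => fderiv ℝ f y (Pi.single j 1) + 2 * a j * y j) x (Pi.single i 1) := by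
    unfold Hess
    rw [Matrix.of_apply, hG.fderiv_eq]
  rw [hH]
  have hB : HasFDerivAt (fun y : Fin n → ℝ => 2 * a j * y j)
      ((2 * a j) • (ContinuousLinearMap.proj j : (Fin n → ℝ) →L[ℝ] ℝ)) x :=
    (hasFDerivAt_apply j x).const_mul (2 * a j)
  have hA := partial_hasFDerivAt hU hf hx j
  rw [(hA.fun_add hB).fderiv]
  simp [ContinuousLinearMap.apply_apply, Pi.single_apply, mul_comm]

/-- At a critical point of the perturbed function, the parameter is recovered by `phiMap`. -/
lemma param_eq_phiMap (hU : IsOpen U) (hf : ContDiffOn ℝ (⊤ : ℕ∞) f U)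
    {x : Fin n → ℝ} (hx : x ∈ U) (hxne : ∀ i, x i ≠ 0) {a : Fin n → ℝ}
    (hcrit : IsCriticalPt (fun y => f y + qa a y) x) :
    phiMap f x = a := by
  have hdf : DifferentiableAt ℝ f x :=
    (hf.contDiffAt (hU.mem_nhds hx)).differentiableAt (by simp)
  have hq := qa_hasFDerivAt a x
  have hsum : fderiv ℝ (fun z => f z + qa a z) x =
      fderiv ℝ f x + ∑ k, (2 * a k * x k) • (ContinuousLinearMap.proj k : (Fin n → ℝ) →L[ℝ] ℝ) :=
    (hdf.hasFDerivAt.add hq).fderiv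
  funext i
  have h0 : fderiv ℝ (fun z => f z + qa a z) x (Pi.single i 1) = 0 := by
    rw [hcrit]; rfl
  rw [hsum] at h0
  have h1 : fderiv ℝ f x (Pi.single i 1) + 2 * a i * x i = 0 := by
    simpa [ContinuousLinearMap.sum_apply, Pi.single_apply, mul_ite, Finset.sum_ite_eq'] using h0
  have h2 : fderiv ℝ f x (Pi.single i 1) = -(2 * a i * x i) := by linarith
  have hx2 : (2:ℝ) * x i ≠ 0 := mul_ne_zero two_ne_zero (hxne i)
  unfold phiMap
  rw [h2, neg_neg, mul_inv_eq_iff_eq_mul₀ hx2]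
  ring

/-- At a degenerate critical point, `phiMap` has singular differential. -/
lemma det_fderiv_phiMap_eq_zero (hU : IsOpen U) (hf : ContDiffOn ℝ (⊤ : ℕ∞) f U)
    {x : Fin n → ℝ} (hx : x ∈ U) (hxne : ∀ i, x i ≠ 0) {a : Fin n → ℝ}
    (hcrit : IsCriticalPt (fun y => f y + qa a y) x)
    (hdeg : (Hess (fun y => f y + qa a y) x).det = 0) :
    (fderiv ℝ (phiMap f) x).det = 0 := by
  classical
  -- first partial derivatives at the critical point
  have hdf : DifferentiableAt ℝ f x :=
    (hf.contDiffAt (hU.mem_nhds hx)).differentiableAt (by simp)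
  have hsum : fderiv ℝ (fun z => f z + qa a z) x =
      fderiv ℝ f x + ∑ k, (2 * a k * x k) • (ContinuousLinearMap.proj k : (Fin n → ℝ) →L[ℝ] ℝ) :=
    (hdf.hasFDerivAt.add (qa_hasFDerivAt a x)).fderiv
  have hg : ∀ i, fderiv ℝ f x (Pi.single i 1) = -(2 * a i * x i) := by
    intro i
    have h0 : fderiv ℝ (fun z => f z + qa a z) x (Pi.single i 1) = 0 := by
      rw [hcrit]; rfl
    rw [hsum] at h0
    have h1 : fderiv ℝ f x (Pi.single i 1) + 2 * a i * x i = 0 := by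
      simpa [ContinuousLinearMap.sum_apply, Pi.single_apply, mul_ite, Finset.sum_ite_eq'] using h0
    linarith
  -- the Jacobian matrix of phiMap f at x
  set W : Matrix (Fin n) (Fin n) ℝ :=
    LinearMap.toMatrix' ((fderiv ℝ (phiMap f) x : (Fin n → ℝ) →ₗ[ℝ] (Fin n → ℝ))) with hW
  have hdetW : (fderiv ℝ (phiMap f) x).det = W.det := (LinearMap.det_toMatrix' _).symm
  have hWentry : ∀ i j, W i j = fderiv ℝ (phiMap f) x (Pi.single j 1) i := by
    intro i j
    rw [hW, LinearMap.toMatrix'_apply]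
    have heq : (fun j' => if j' = j then (1:ℝ) else 0) = Pi.single j 1 := by
      funext j'; simp [Pi.single_apply]
    rfl
  have hfact : W = Matrix.diagonal (fun i => -(2 * x i)⁻¹) *
      (Hess (fun y => f y + qa a y) x).transpose := by
    ext i j
    rw [hWentry i j, fderiv_phiMap_apply hU hf hx hxne i j, Matrix.diagonal_mul,
      Matrix.transpose_apply, hess_perturbed hU hf hx a j i, hg i]
    rcases eq_or_ne i j with rfl | hij
    · simp only [if_pos rfl]
      have h2x : (2 : ℝ) * x i ≠ 0 := mul_ne_zero two_ne_zero (hxne i)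
      field_simp
      ring
    · simp only [if_neg hij, if_neg (Ne.symm hij)]
      ring
  rw [hdetW, hfact, Matrix.det_mul, Matrix.det_transpose, hdeg, mul_zero]

end Aux

/-- if all coordinates are nonzero on the open set `U`, the set of
`a` such that `f + q_a` is Morse on `U` is residual. -/
theorem morse_quadratic_perturbation_residual_of_coords_ne_zero (n : ℕ)
    (U : Set (Fin n → ℝ)) (hU : IsOpen U) (hcoord : ∀ u ∈ U, ∀ i, u i ≠ 0)
    (f : (Fin n → ℝ) → ℝ) (hf : ContDiffOn ℝ (⊤ : ℕ∞) f U) :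
    {a : Fin n → ℝ | MorseOn (fun x => f x + qa a x) U} ∈ residual (Fin n → ℝ) := by
  classical
  rcases Nat.eq_zero_or_pos n with hn | hn
  · -- n = 0 : every function is Morse, the set is everything
    subst hn
    have : {a : Fin 0 → ℝ | MorseOn (fun x => f x + qa a x) U} = Set.univ := by
      apply Set.eq_univ_of_forall
      intro a x hx hcrit
      simp [Matrix.det_isEmpty]
    rw [this]
    exact Filter.univ_mem
  -- now n > 0, so 0 ∉ U and Uᶜ is nonempty
  have h0U : (0 : Fin n → ℝ) ∉ U := fun h => hcoord 0 h ⟨0, hn⟩ rfl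
  have hUc : (Uᶜ : Set (Fin n → ℝ)).Nonempty := ⟨0, h0U⟩
  -- differentiability data for phiMap
  have hφdiff : ∀ x ∈ U, DifferentiableAt ℝ (phiMap f) x :=
    fun x hx => phiMap_differentiableAt hU hf hx (hcoord x hx)
  -- phiMap is C¹ on U, hence its derivative (and its determinant) is continuous on U
  have hfd1 : ContDiffOn ℝ 1 (fderiv ℝ f) U := hf.fderiv_of_isOpen hU (WithTop.coe_le_coe.2 le_top)
  have hφC : ContDiffOn ℝ 1 (phiMap f) U := by
    rw [contDiffOn_pi]
    intro i
    have h1 : ContDiffOn ℝ 1 (fun y => fderiv ℝ f y (Pi.single i 1)) U :=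
      hfd1.clm_apply contDiffOn_const
    have h2 : ContDiffOn ℝ 1 (fun y : Fin n → ℝ => (2 * y i)⁻¹) U := by
      apply ContDiffOn.inv
      · exact (contDiff_const.mul ((ContinuousLinearMap.proj i :
          (Fin n → ℝ) →L[ℝ] ℝ).contDiff)).contDiffOn
      · exact fun y hy => mul_ne_zero two_ne_zero (hcoord y hy i)
    exact h1.neg.mul h2
  have hφcont : ContinuousOn (phiMap f) U := hφC.continuousOn
  have hdetcont : ContinuousOn (fun x => (fderiv ℝ (phiMap f) x).det) U :=
    ContinuousLinearMap.continuous_det.comp_continuousOn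
      (hφC.continuousOn_fderiv_of_isOpen hU le_rfl)
  -- extract an open set u capturing where the determinant is nonzero, relative to U
  obtain ⟨u, hu_open, hu_eq⟩ :=
    (continuousOn_iff'.1 hdetcont) ({0}ᶜ) isOpen_compl_singleton
  have hu_char : ∀ x ∈ U, ((fderiv ℝ (phiMap f) x).det = 0 ↔ x ∉ u) := by
    intro x hxU
    constructor
    · intro h0 hxu
      have : x ∈ (fun x => (fderiv ℝ (phiMap f) x).det) ⁻¹' ({0}ᶜ) ∩ U := by
        rw [hu_eq]; exact ⟨hxu, hxU⟩
      exact this.1 h0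
    · intro hxu
      by_contra h0
      have : x ∈ u ∩ U := by
        rw [← hu_eq]; exact ⟨h0, hxU⟩
      exact hxu this.1
  -- compact pieces exhausting U
  set C : ℕ → Set (Fin n → ℝ) :=
    fun m => Metric.closedBall 0 m ∩ {x | 1 / (m + 1) ≤ Metric.infDist x Uᶜ} with hC
  have hC_compact : ∀ m, IsCompact (C m) := by
    intro m
    exact (isCompact_closedBall 0 m).inter_right
      (isClosed_le continuous_const (Metric.continuous_infDist_pt Uᶜ))
  have hC_subU : ∀ m, C m ⊆ U := by
    intro m x hxm
    have hpos : 0 < Metric.infDist x Uᶜ :=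
      lt_of_lt_of_le (by positivity) hxm.2
    by_contra hxU
    have hmem : x ∉ Uᶜ := ((hU.isClosed_compl).notMem_iff_infDist_pos hUc).2 hpos
    exact hxU (by simpa using hmem)
  -- the bad pieces
  set s : ℕ → Set (Fin n → ℝ) := fun m => uᶜ ∩ C m with hs
  have hs_compact : ∀ m, IsCompact (s m) :=
    fun m => (hC_compact m).inter_left (isClosed_compl_iff.2 hu_open)
  have hs_subU : ∀ m, s m ⊆ U := fun m x hxs => hC_subU m hxs.2
  set Z : ℕ → Set (Fin n → ℝ) := fun m => phiMap f '' s m with hZ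
  have hZ_compact : ∀ m, IsCompact (Z m) :=
    fun m => (hs_compact m).image_of_continuousOn (hφcont.mono (hs_subU m))
  have hZ_null : ∀ m, MeasureTheory.volume (Z m) = 0 := by
    intro m
    apply MeasureTheory.addHaar_image_eq_zero_of_det_fderivWithin_eq_zero
      (f' := fun x => fderiv ℝ (phiMap f) x) MeasureTheory.volume
    · exact fun x hx => ((hφdiff x (hs_subU m hx)).hasFDerivAt).hasFDerivWithinAt
    · exact fun x hx => (hu_char x (hs_subU m hx)).2 hx.1
  have hZ_meagre : ∀ m, IsMeagre (Z m) := by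
    intro m
    have hclosed : IsClosed (Z m) := (hZ_compact m).isClosed
    have hint : interior (Z m) = ∅ := by
      by_contra hne
      have : 0 < MeasureTheory.volume (Z m) :=
        MeasureTheory.Measure.measure_pos_of_nonempty_interior _
          (Set.nonempty_iff_ne_empty.2 hne)
      rw [hZ_null m] at this
      exact lt_irrefl _ this
    exact residual_of_dense_open hclosed.isOpen_compl
      (interior_eq_empty_iff_dense_compl.1 hint)
  -- the bad set is contained in the union of the Z m
  have hsubset : {a : Fin n → ℝ | MorseOn (fun x => f x + qa a x) U}ᶜ ⊆ ⋃ m, Z m := by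
    intro a ha
    simp only [Set.mem_compl_iff, Set.mem_setOf_eq, MorseOn, not_forall] at ha
    obtain ⟨x, hxU, hcrit, hdeg⟩ := ha
    have hdeg' : (Hess (fun y => f y + qa a y) x).det = 0 := by
      by_contra h; exact hdeg h
    have hxne := hcoord x hxU
    have haeq : phiMap f x = a := param_eq_phiMap hU hf hxU hxne hcrit
    have hdet0 : (fderiv ℝ (phiMap f) x).det = 0 :=
      det_fderiv_phiMap_eq_zero hU hf hxU hxne hcrit hdeg'
    have hxu : x ∉ u := (hu_char x hxU).1 hdet0
    -- choose m large enough
    have hdpos : 0 < Metric.infDist x Uᶜ :=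
      ((hU.isClosed_compl).notMem_iff_infDist_pos hUc).1 (by simpa using hxU)
    obtain ⟨m1, hm1⟩ := exists_nat_ge ‖x‖
    obtain ⟨m2, hm2⟩ := exists_nat_ge (1 / Metric.infDist x Uᶜ)
    refine Set.mem_iUnion.2 ⟨m1 + m2, ⟨x, ⟨hxu, ?_, ?_⟩, haeq⟩⟩
    · rw [Metric.mem_closedBall, dist_zero_right]
      calc ‖x‖ ≤ m1 := hm1
        _ ≤ (m1 + m2 : ℕ) := by exact_mod_cast Nat.le_add_right m1 m2
    · show 1 / ((m1 + m2 : ℕ) + 1) ≤ Metric.infDist x Uᶜ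
      rw [div_le_iff₀ (by positivity)]
      rw [div_le_iff₀ hdpos] at hm2
      calc (1 : ℝ) ≤ m2 * Metric.infDist x Uᶜ := hm2
        _ ≤ Metric.infDist x Uᶜ * ((m1 + m2 : ℕ) + 1) := by
            rw [mul_comm]
            apply mul_le_mul_of_nonneg_left _ hdpos.le
            push_cast; linarith [Nat.cast_nonneg (α := ℝ) m1]
  have hmeagre : IsMeagre ({a : Fin n → ℝ | MorseOn (fun x => f x + qa a x) U}ᶜ) :=
    (isMeagre_iUnion hZ_meagre).mono hsubset
  rw [IsMeagre, compl_compl] at hmeagre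
  exact hmeagre
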